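/- arXiv:1708.01361 — 3 statements merged into one kernel-verified Lean document; each statement's English description precedes it below -/
import Mathlib

section
/- If ψ is a nilsequence such that lim_{N→∞} (1/N) Σ_{n=1}^N |ψ(n)| = 0, then ψ(n) = 0 for all n ∈ ℕ. -/
/-- A nilmanifold `X = G/Γ`: a finite-dimensional nilpotent Lie group `G` together with
a discrete cocompact subgroup `Γ`. -/
structure Nilmanifold where
  E : Type
  [nacg : NormedAddCommGroup E]
  [nsp : NormedSpace ℝ E]
  [fd : FiniteDimensional ℝ E]
  G : Type
  [grp : Group G]
  [tsp : TopologicalSpace G]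
  [tgrp : IsTopologicalGroup G]
  [csp : ChartedSpace E G]
  lie : LieGroup (modelWithCornersSelf ℝ E) (⊤ : ℕ∞) G
  nilpotent : Group.IsNilpotent G
  Γ : Subgroup G
  discrete : DiscreteTopology Γ
  cpt : CompactSpace (G ⧸ Γ)

attribute [instance] Nilmanifold.nacg Nilmanifold.nsp Nilmanifold.fd
  Nilmanifold.grp Nilmanifold.tsp Nilmanifold.tgrp Nilmanifold.csp Nilmanifold.cpt

open Filter MeasureTheory Topology

/-- The underlying compact homogeneous space `X = G/Γ` of a nilmanifold. -/
abbrev Nilmanifold.Space (Nm : Nilmanifold) : Type := Nm.G ⧸ Nm.Γ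

/-- The base point `1_X = π(1_G)` of a nilmanifold. -/
noncomputable def Nilmanifold.base (Nm : Nilmanifold) : Nm.Space :=
  QuotientGroup.mk (1 : Nm.G)

/-- A basic nilsequence: `ψ n = f (τ ^ n • x)` for a continuous `f` on a nilmanifold. -/
def IsBasicNilsequence (ψ : ℕ → ℂ) : Prop :=
  ∃ (Nm : Nilmanifold) (f : C(Nm.Space, ℂ)) (τ : Nm.G) (x : Nm.Space),
    ∀ n : ℕ, ψ n = f (τ ^ n • x)

/-- A nilsequence is a uniform limit of basic nilsequences. -/
def IsNilsequence (ψ : ℕ → ℂ) : Prop :=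
  ∃ Ψ : ℕ → ℕ → ℂ, (∀ k, IsBasicNilsequence (Ψ k)) ∧ TendstoUniformly Ψ ψ atTop

/-- `ε` is (bounded and) null along the increasing sequence `r` (0-indexed):
`(1/N) ∑_{n=1}^N |ε (r n)| → 0`. -/
def NullAlong (ε : ℕ → ℂ) (r : ℕ → ℕ) : Prop :=
  (∃ C : ℝ, ∀ n, ‖ε n‖ ≤ C) ∧
  Tendsto (fun N : ℕ => (N : ℝ)⁻¹ * ∑ n ∈ Finset.range N, ‖ε (r n)‖)
    atTop (nhds 0)

/-- A null sequence: bounded, with `(1/N) ∑_{n=1}^N |ε n| → 0`. -/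
def IsNullSeq (ε : ℕ → ℂ) : Prop := NullAlong ε (fun n => n + 1)


open Pointwise

/-! ### Generic topological dynamics preliminaries -/

section Prep

variable {X : Type} [TopologicalSpace X]

theorem myContinuous_comp_right (q : X → X) :
    Continuous fun p : X → X => p ∘ q :=
  continuous_pi fun x => continuous_apply (q x)

theorem myContinuous_comp_left {k : X → X} (hk : Continuous k) :
    Continuous fun p : X → X => k ∘ p :=
  continuous_pi fun x => hk.comp (continuous_apply x)

theorem myContinuous_conj {X X' Y Y' : Type} [TopologicalSpace Y] [TopologicalSpace Y']
    {k : Y → Y'} (hk : Continuous k) (q : X' → X) :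
    Continuous fun p : X → Y => k ∘ p ∘ q :=
  continuous_pi fun z => hk.comp (continuous_apply (q z))

/-- Ellis–Numakura applied to a closed subsemigroup of `X → X`. -/
theorem exists_idem_of_compact_subsemigroup [CompactSpace X] [T2Space X]
    (S : Set (X → X)) (hne : S.Nonempty) (hcl : IsClosed S)
    (hmul : ∀ p ∈ S, ∀ q ∈ S, p ∘ q ∈ S) : ∃ u ∈ S, u ∘ u = u := by
  letI : Semigroup S :=
    { mul := fun p q => ⟨p.1 ∘ q.1, hmul _ p.2 _ q.2⟩
      mul_assoc := fun a b c => Subtype.ext rfl }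
  haveI : Nonempty S := hne.to_subtype
  haveI : CompactSpace S := isCompact_iff_compactSpace.mp hcl.isCompact
  have hc : ∀ r : S, Continuous fun p : S => p * r := fun r =>
    Continuous.subtype_mk ((myContinuous_comp_right r.1).comp continuous_subtype_val) _
  obtain ⟨⟨u, hu⟩, h⟩ := exists_idempotent_of_compact_t2_of_continuous_mul_left hc
  exact ⟨u, hu, congrArg Subtype.val h⟩

end Prep

section Homogeneous

variable {G : Type} [Group G] [TopologicalSpace G] [IsTopologicalGroup G]

/-- Coset spaces of closed subgroups are Hausdorff. -/
theorem t2_quotient_of_isClosed (H : Subgroup G) (hH : IsClosed (H : Set G)) :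
    T2Space (G ⧸ H) := by
  constructor
  intro a b hab
  obtain ⟨g, rfl⟩ := QuotientGroup.mk_surjective a
  obtain ⟨g', rfl⟩ := QuotientGroup.mk_surjective b
  have hgg' : g⁻¹ * g' ∉ H := fun h => hab (QuotientGroup.eq.mpr h)
  set S : Set G := (fun x => g⁻¹ * x * g') ⁻¹' (H : Set G) with hSdef
  have hSc : IsClosed S := hH.preimage (by continuity)
  have h1 : (1 : G) ∈ Sᶜ := by
    intro hmem
    rw [hSdef] at hmem
    simp only [Set.mem_preimage, mul_one] at hmem
    exact hgg' hmem
  have hcont : ContinuousAt (fun p : G × G => p.1⁻¹ * p.2) (1, 1) := by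
    apply Continuous.continuousAt; continuity
  have hpre : (fun p : G × G => p.1⁻¹ * p.2) ⁻¹' Sᶜ ∈ 𝓝 ((1 : G), (1 : G)) := by
    apply hcont.preimage_mem_nhds
    simpa using hSc.isOpen_compl.mem_nhds h1
  rw [nhds_prod_eq, Filter.mem_prod_iff] at hpre
  obtain ⟨V, hV, W, hW, hVW⟩ := hpre
  obtain ⟨V₀, hV₀sub, hV₀open, hV₀mem⟩ := mem_nhds_iff.mp (Filter.inter_mem hV hW)
  refine ⟨QuotientGroup.mk '' ((fun v => v * g) '' V₀),
          QuotientGroup.mk '' ((fun v => v * g') '' V₀),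
          QuotientGroup.isOpenMap_coe _ ((Homeomorph.mulRight g).isOpenMap _ hV₀open),
          QuotientGroup.isOpenMap_coe _ ((Homeomorph.mulRight g').isOpenMap _ hV₀open),
          ⟨g, ⟨1, hV₀mem, one_mul g⟩, rfl⟩, ⟨g', ⟨1, hV₀mem, one_mul g'⟩, rfl⟩, ?_⟩
  rw [Set.disjoint_iff]
  rintro z ⟨⟨_, ⟨v, hv, rfl⟩, rfl⟩, ⟨_, ⟨v', hv', rfl⟩, hz⟩⟩
  have hmem : (v * g)⁻¹ * (v' * g') ∈ H := QuotientGroup.eq.mp hz.symm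
  have : v⁻¹ * v' ∈ Sᶜ :=
    hVW (Set.mk_mem_prod (hV₀sub hv).1 (hV₀sub hv').2)
  apply this
  show g⁻¹ * (v⁻¹ * v') * g' ∈ (H : Set G)
  have : (v * g)⁻¹ * (v' * g') = g⁻¹ * (v⁻¹ * v') * g' := by group
  rwa [this] at hmem

/-- Left translations on the coset space. -/
def qphi (H : Subgroup G) (g : G) : G ⧸ H → G ⧸ H := fun x => g • x

theorem qphi_cont (H : Subgroup G) (g : G) : Continuous (qphi H g) :=
  continuous_const_smul g

theorem qphi_mul (H : Subgroup G) (g g' : G) :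
    qphi H (g * g') = qphi H g ∘ qphi H g' :=
  funext fun x => mul_smul g g' x

theorem qphi_id (H : Subgroup G) : qphi H 1 = id := funext fun x => one_smul G x

/-- The Ellis semigroup of the `G`-action on `G ⧸ H`. -/
def Ell (H : Subgroup G) : Set ((G ⧸ H) → (G ⧸ H)) := closure (Set.range (qphi H))

theorem qphi_mem_Ell (H : Subgroup G) (g : G) : qphi H g ∈ Ell H :=
  subset_closure ⟨g, rfl⟩

theorem conj_mem_Ell (H : Subgroup G) (g : G) {u : (G ⧸ H) → (G ⧸ H)} (hu : u ∈ Ell H) :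
    qphi H g⁻¹ ∘ u ∘ qphi H g ∈ Ell H := by
  have hcont : Continuous fun p : (G ⧸ H) → (G ⧸ H) => qphi H g⁻¹ ∘ p ∘ qphi H g :=
    myContinuous_conj (qphi_cont H g⁻¹) (qphi H g)
  have himg := image_closure_subset_closure_image
    (s := Set.range (qphi H)) hcont
  have hsub : (fun p : (G ⧸ H) → (G ⧸ H) => qphi H g⁻¹ ∘ p ∘ qphi H g) ''
      Set.range (qphi H) ⊆ Set.range (qphi H) := by
    rintro _ ⟨_, ⟨g', rfl⟩, rfl⟩
    exact ⟨g⁻¹ * (g' * g), by rw [qphi_mul, qphi_mul]⟩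
  have : qphi H g⁻¹ ∘ u ∘ qphi H g ∈ closure ((fun p => qphi H g⁻¹ ∘ p ∘ qphi H g) ''
      Set.range (qphi H)) := himg ⟨u, hu, rfl⟩
  exact closure_mono hsub this
end Homogeneous

section Transfer

variable {G : Type} [Group G] [TopologicalSpace G] [IsTopologicalGroup G]

/-- Transfer idempotent-triviality from the quotient-group picture to `G ⧸ H'`. -/
theorem Ell_transfer_id (C H' : Subgroup G) [C.Normal] (hCH' : C ≤ H')
    [CompactSpace (G ⧸ H')]
    (hIH : CompactSpace ((G ⧸ C) ⧸ H'.map (QuotientGroup.mk' C)) →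
      ∀ u' ∈ Ell (H'.map (QuotientGroup.mk' C)), u' ∘ u' = u' → u' = id)
    {q : (G ⧸ H') → (G ⧸ H')} (hq : q ∈ Ell H') (hqq : q ∘ q = q) : q = id := by
  have hrel : ∀ a b : G, (QuotientGroup.leftRel H') a b →
      (QuotientGroup.leftRel (H'.map (QuotientGroup.mk' C)))
        (QuotientGroup.mk a) (QuotientGroup.mk b) := by
    intro a b hab
    rw [QuotientGroup.leftRel_apply] at hab ⊢
    refine ⟨a⁻¹ * b, hab, ?_⟩
    simp
  let ρ : (G ⧸ H') → ((G ⧸ C) ⧸ H'.map (QuotientGroup.mk' C)) :=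
    Quotient.map' QuotientGroup.mk hrel
  let σ0 : (G ⧸ C) → (G ⧸ H') := Quotient.map' id (fun a b hab => by
    rw [QuotientGroup.leftRel_apply] at hab ⊢
    exact hCH' hab)
  have hσrel : ∀ w₁ w₂ : G ⧸ C,
      (QuotientGroup.leftRel (H'.map (QuotientGroup.mk' C))) w₁ w₂ → σ0 w₁ = σ0 w₂ := by
    intro w₁ w₂ hw
    obtain ⟨a, rfl⟩ := QuotientGroup.mk_surjective w₁
    obtain ⟨b, rfl⟩ := QuotientGroup.mk_surjective w₂
    rw [QuotientGroup.leftRel_apply] at hw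
    obtain ⟨h, hh, hhab⟩ := hw
    have hmkeq : QuotientGroup.mk h = (QuotientGroup.mk (a⁻¹ * b) : G ⧸ C) := by
      simpa using hhab
    have hC : h⁻¹ * (a⁻¹ * b) ∈ C := QuotientGroup.eq.mp hmkeq
    have hmem : a⁻¹ * b ∈ H' := by
      have heq : a⁻¹ * b = h * (h⁻¹ * (a⁻¹ * b)) := by group
      rw [heq]; exact H'.mul_mem hh (hCH' hC)
    show (QuotientGroup.mk a : G ⧸ H') = QuotientGroup.mk b
    exact QuotientGroup.eq.mpr hmem
  let σ : ((G ⧸ C) ⧸ H'.map (QuotientGroup.mk' C)) → (G ⧸ H') :=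
    fun z => Quotient.liftOn' z σ0 hσrel
  have hσρ : ∀ y, σ (ρ y) = y := by
    intro y; obtain ⟨g, rfl⟩ := QuotientGroup.mk_surjective y; rfl
  have hρσ : ∀ z, ρ (σ z) = z := by
    intro z
    obtain ⟨w, rfl⟩ := QuotientGroup.mk_surjective z
    obtain ⟨g, rfl⟩ := QuotientGroup.mk_surjective w
    rfl
  have hρcont : Continuous ρ := by
    rw [(QuotientGroup.isQuotientMap_mk H').continuous_iff]
    have h : (ρ ∘ (QuotientGroup.mk : G → G ⧸ H'))
        = fun g : G => (QuotientGroup.mk (QuotientGroup.mk g) :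
          (G ⧸ C) ⧸ H'.map (QuotientGroup.mk' C)) := rfl
    rw [h]
    exact QuotientGroup.continuous_mk.comp QuotientGroup.continuous_mk
  have hσ0cont : Continuous σ0 := by
    rw [(QuotientGroup.isQuotientMap_mk C).continuous_iff]
    have h : (σ0 ∘ (QuotientGroup.mk : G → G ⧸ C)) = (QuotientGroup.mk : G → G ⧸ H') := rfl
    rw [h]; exact QuotientGroup.continuous_mk
  have hσcont : Continuous σ := by
    rw [(QuotientGroup.isQuotientMap_mk (H'.map (QuotientGroup.mk' C))).continuous_iff]
    have h : (σ ∘ (QuotientGroup.mk : (G ⧸ C) → (G ⧸ C) ⧸ H'.map (QuotientGroup.mk' C))) = σ0 := rfl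
    rw [h]; exact hσ0cont
  haveI hcpt'' : CompactSpace ((G ⧸ C) ⧸ H'.map (QuotientGroup.mk' C)) := by
    constructor
    have hsurj : Function.Surjective ρ := fun z => ⟨σ z, hρσ z⟩
    have h : (Set.univ : Set ((G ⧸ C) ⧸ H'.map (QuotientGroup.mk' C))) = ρ '' Set.univ := by
      rw [Set.image_univ, Set.range_eq_univ.mpr hsurj]
    rw [h]; exact isCompact_univ.image hρcont
  have hq' : (ρ ∘ q ∘ σ) ∈ Ell (H'.map (QuotientGroup.mk' C)) := by
    have hcont : Continuous fun p : (G ⧸ H') → (G ⧸ H') => ρ ∘ p ∘ σ :=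
      myContinuous_conj hρcont σ
    have hmem : (ρ ∘ q ∘ σ) ∈ closure ((fun p : (G ⧸ H') → (G ⧸ H') => ρ ∘ p ∘ σ) ''
        Set.range (qphi H')) :=
      image_closure_subset_closure_image (s := Set.range (qphi H')) hcont ⟨q, hq, rfl⟩
    refine closure_mono ?_ hmem
    rintro _ ⟨_, ⟨g, rfl⟩, rfl⟩
    refine ⟨QuotientGroup.mk g, ?_⟩
    funext z
    obtain ⟨w, rfl⟩ := QuotientGroup.mk_surjective z
    obtain ⟨g', rfl⟩ := QuotientGroup.mk_surjective w
    rfl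
  have hqq' : (ρ ∘ q ∘ σ) ∘ (ρ ∘ q ∘ σ) = ρ ∘ q ∘ σ := by
    funext z
    show ρ (q (σ (ρ (q (σ z))))) = ρ (q (σ z))
    rw [hσρ]
    exact congrArg ρ (congrFun hqq (σ z))
  have hid := hIH hcpt'' _ hq' hqq'
  funext y
  have h : ρ (q (σ (ρ y))) = ρ y := congrFun hid (ρ y)
  rw [hσρ y] at h
  have h2 := congrArg σ h
  rwa [hσρ, hσρ] at h2

end Transfer

/-- **Key theorem**: on a compact Hausdorff coset space of a nilpotent topological
group, every idempotent in the Ellis semigroup of the translation action is the identity. -/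
theorem idem_eq_id : ∀ (n : ℕ) (G : Type) [Group G] [TopologicalSpace G] [IsTopologicalGroup G],
    Subgroup.upperCentralSeries G n = ⊤ → ∀ (H : Subgroup G), IsClosed (H : Set G) →
    CompactSpace (G ⧸ H) → ∀ u ∈ Ell H, u ∘ u = u → u = id := by
  intro n
  induction n with
  | zero =>
    intro G _ _ _ htop H _ _ u _ _
    have hsub : Subsingleton G := by
      refine ⟨fun a b => ?_⟩
      have ha : a ∈ Subgroup.upperCentralSeries G 0 := htop ▸ Subgroup.mem_top a
      have hb : b ∈ Subgroup.upperCentralSeries G 0 := htop ▸ Subgroup.mem_top b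
      rw [Subgroup.upperCentralSeries_zero, Subgroup.mem_bot] at ha hb
      rw [ha, hb]
    have : Subsingleton (G ⧸ H) := QuotientGroup.mk_surjective.subsingleton
    funext x; exact Subsingleton.elim _ _
  | succ n ih =>
    intro G _ _ _ htop H hHc hcpt u huE huu
    haveI := hcpt
    haveI hT2X : T2Space (G ⧸ H) := t2_quotient_of_isClosed H hHc
    -- every idempotent of the Ellis semigroup fixes the base point
    have hfix : ∀ v ∈ Ell H, v ∘ v = v → v (QuotientGroup.mk 1) = QuotientGroup.mk 1 := by
      intro v hvE hvv
      have hCH' : Subgroup.center G ≤ (Subgroup.center G ⊔ H).topologicalClosure :=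
        le_trans le_sup_left (Subgroup.le_topologicalClosure _)
      have hHH' : H ≤ (Subgroup.center G ⊔ H).topologicalClosure :=
        le_trans le_sup_right (Subgroup.le_topologicalClosure _)
      have hH'c : IsClosed (((Subgroup.center G ⊔ H).topologicalClosure : Subgroup G) : Set G) :=
        Subgroup.isClosed_topologicalClosure _
      -- elements of the closure of `center ⊔ H` normalize `H`
      have hnorm : ∀ a ∈ (Subgroup.center G ⊔ H).topologicalClosure,
          ∀ h ∈ H, a⁻¹ * h * a ∈ H := by
        have hclosedset : IsClosed {a : G | ∀ h ∈ H, a⁻¹ * h * a ∈ H} := by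
          have hrw : {a : G | ∀ h ∈ H, a⁻¹ * h * a ∈ H}
              = ⋂ h ∈ (H : Set G), (fun a : G => a⁻¹ * h * a) ⁻¹' (H : Set G) := by
            ext a; simp
          rw [hrw]
          exact isClosed_biInter fun h _ => hHc.preimage (by continuity)
        have hbase : ((Subgroup.center G ⊔ H : Subgroup G) : Set G) ⊆
            {a : G | ∀ h ∈ H, a⁻¹ * h * a ∈ H} := by
          intro a ha
          rw [Subgroup.normal_mul] at ha
          obtain ⟨z, hz, h₀, hh₀, rfl⟩ := ha
          intro h hh
          have hzc := Subgroup.mem_center_iff.mp hz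
          have hc : z⁻¹ * (h * z) = h := by rw [hzc h]; group
          have heq : (z * h₀)⁻¹ * h * (z * h₀) = h₀⁻¹ * (z⁻¹ * (h * z)) * h₀ := by group
          rw [heq, hc]
          exact H.mul_mem (H.mul_mem (H.inv_mem hh₀) hh) hh₀
        intro a ha
        exact closure_minimal hbase hclosedset ha
      -- the projection to `G ⧸ H'`
      let π : G ⧸ H → G ⧸ (Subgroup.center G ⊔ H).topologicalClosure :=
        Quotient.map' id (fun a b hab => by
          rw [QuotientGroup.leftRel_apply] at hab ⊢
          exact hHH' hab)
      have hπmk : ∀ g : G, π (QuotientGroup.mk g) = QuotientGroup.mk g := fun g => rfl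
      have hπcont : Continuous π := by
        rw [(QuotientGroup.isQuotientMap_mk H).continuous_iff]
        have h : (π ∘ (QuotientGroup.mk : G → G ⧸ H))
            = (QuotientGroup.mk : G → G ⧸ (Subgroup.center G ⊔ H).topologicalClosure) := rfl
        rw [h]; exact QuotientGroup.continuous_mk
      have hπsurj : Function.Surjective π := fun y => by
        obtain ⟨g, rfl⟩ := QuotientGroup.mk_surjective y
        exact ⟨QuotientGroup.mk g, rfl⟩
      haveI hcptY : CompactSpace (G ⧸ (Subgroup.center G ⊔ H).topologicalClosure) := by
        constructor
        have h : (Set.univ : Set (G ⧸ (Subgroup.center G ⊔ H).topologicalClosure))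
            = π '' Set.univ := by
          rw [Set.image_univ, Set.range_eq_univ.mpr hπsurj]
        rw [h]; exact isCompact_univ.image hπcont
      haveI hT2Y : T2Space (G ⧸ (Subgroup.center G ⊔ H).topologicalClosure) :=
        t2_quotient_of_isClosed _ hH'c
      -- find a companion `q` of `v` acting on `G ⧸ H'`
      obtain ⟨⟨p, q⟩, hpq, rfl⟩ : ∃ w ∈ closure (Set.range fun g =>
          (qphi H g, qphi ((Subgroup.center G ⊔ H).topologicalClosure) g)), w.1 = v := by
        have hPPcomp : IsCompact (closure (Set.range fun g =>
            (qphi H g, qphi ((Subgroup.center G ⊔ H).topologicalClosure) g))) :=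
          isClosed_closure.isCompact
        have hclosed : IsClosed (Prod.fst '' closure (Set.range fun g =>
            (qphi H g, qphi ((Subgroup.center G ⊔ H).topologicalClosure) g))) :=
          (hPPcomp.image continuous_fst).isClosed
        have hsub : Set.range (qphi H) ⊆ Prod.fst '' closure (Set.range fun g =>
            (qphi H g, qphi ((Subgroup.center G ⊔ H).topologicalClosure) g)) := by
          rintro _ ⟨g, rfl⟩
          exact ⟨_, subset_closure ⟨g, rfl⟩, rfl⟩
        obtain ⟨w, hw, hw1⟩ := closure_minimal hsub hclosed hvE
        exact ⟨w, hw, hw1⟩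
      -- q belongs to the Ellis semigroup downstairs
      have hqE : q ∈ Ell ((Subgroup.center G ⊔ H).topologicalClosure) := by
        have hmem : q ∈ closure (Prod.snd '' Set.range fun g =>
            (qphi H g, qphi ((Subgroup.center G ⊔ H).topologicalClosure) g)) :=
          image_closure_subset_closure_image continuous_snd ⟨(p, q), hpq, rfl⟩
        refine closure_mono ?_ hmem
        rintro _ ⟨_, ⟨g, rfl⟩, rfl⟩; exact ⟨g, rfl⟩
      -- intertwining
      have hπp : π ∘ p = q ∘ π := by
        have hclosed : IsClosed {pq : (((G ⧸ H) → (G ⧸ H)) ×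
            ((G ⧸ (Subgroup.center G ⊔ H).topologicalClosure) →
              (G ⧸ (Subgroup.center G ⊔ H).topologicalClosure))) | π ∘ pq.1 = pq.2 ∘ π} := by
          have hrw : {pq : (((G ⧸ H) → (G ⧸ H)) ×
              ((G ⧸ (Subgroup.center G ⊔ H).topologicalClosure) →
                (G ⧸ (Subgroup.center G ⊔ H).topologicalClosure))) | π ∘ pq.1 = pq.2 ∘ π}
              = ⋂ x : G ⧸ H, {pq : (((G ⧸ H) → (G ⧸ H)) ×
              ((G ⧸ (Subgroup.center G ⊔ H).topologicalClosure) →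
                (G ⧸ (Subgroup.center G ⊔ H).topologicalClosure))) |
                  π (pq.1 x) = pq.2 (π x)} := by
            ext pq
            simp only [Set.mem_setOf_eq, Set.mem_iInter, funext_iff, Function.comp_apply]
          rw [hrw]
          exact isClosed_iInter fun x => isClosed_eq
            (hπcont.comp ((continuous_apply x).comp continuous_fst))
            ((continuous_apply (π x)).comp continuous_snd)
        have hgen : (Set.range fun g =>
            (qphi H g, qphi ((Subgroup.center G ⊔ H).topologicalClosure) g)) ⊆
            {pq | π ∘ pq.1 = pq.2 ∘ π} := by
          rintro _ ⟨g, rfl⟩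
          funext x
          obtain ⟨g', rfl⟩ := QuotientGroup.mk_surjective x
          rfl
        exact closure_minimal hgen hclosed hpq
      -- q is idempotent
      have hqq : q ∘ q = q := by
        funext y
        obtain ⟨x, rfl⟩ := hπsurj y
        show q (q (π x)) = q (π x)
        have h1 : q (π x) = π (p x) := by
          have h := congrFun hπp x
          simp only [Function.comp_apply] at h
          exact h.symm
        have h2 : π (p (p x)) = q (π (p x)) := by
          have h := congrFun hπp (p x)
          simp only [Function.comp_apply] at h
          exact h
        rw [h1, ← h2]
        exact congrArg π (congrFun hvv x)
      -- pass to the quotient group `G ⧸ center` and use the inductive hypothesis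
      have hGq : Subgroup.upperCentralSeries (G ⧸ Subgroup.center G) n = ⊤ := by
        have hcomap := comap_upperCentralSeries_quotient_center (G := G) n
        simp only [Nat.succ_eq_add_one] at hcomap
        rw [htop] at hcomap
        have hmapcomap := Subgroup.map_comap_eq_self_of_surjective
          (f := QuotientGroup.mk' (Subgroup.center G))
          (QuotientGroup.mk'_surjective (Subgroup.center G))
          (Subgroup.upperCentralSeries (G ⧸ Subgroup.center G) n)
        rw [hcomap] at hmapcomap
        rw [← hmapcomap]
        exact Subgroup.map_top_of_surjective _ (QuotientGroup.mk'_surjective _)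
      have hH''c : IsClosed ((((Subgroup.center G ⊔ H).topologicalClosure).map
          (QuotientGroup.mk' (Subgroup.center G)) : Subgroup (G ⧸ Subgroup.center G)) :
            Set (G ⧸ Subgroup.center G)) := by
        have hpre : (QuotientGroup.mk : G → G ⧸ Subgroup.center G) ⁻¹'
            ((((Subgroup.center G ⊔ H).topologicalClosure).map
              (QuotientGroup.mk' (Subgroup.center G)) : Subgroup (G ⧸ Subgroup.center G)) :
                Set (G ⧸ Subgroup.center G))
            = (((Subgroup.center G ⊔ H).topologicalClosure : Subgroup G) : Set G) := by
          ext g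
          simp only [Set.mem_preimage, SetLike.mem_coe, Subgroup.mem_map]
          constructor
          · rintro ⟨h, hh, heq⟩
            have hmkeq : QuotientGroup.mk h = (QuotientGroup.mk g : G ⧸ Subgroup.center G) := by
              simpa using heq
            have hC : h⁻¹ * g ∈ Subgroup.center G := QuotientGroup.eq.mp hmkeq
            have hgeq : g = h * (h⁻¹ * g) := by group
            rw [hgeq]
            exact Subgroup.mul_mem _ hh (hCH' hC)
          · intro hg
            exact ⟨g, hg, rfl⟩
        rw [← (QuotientGroup.isQuotientMap_mk (Subgroup.center G)).isClosed_preimage, hpre]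
        exact hH'c
      have hq_id : q = id := by
        refine Ell_transfer_id (Subgroup.center G) _ hCH' ?_ hqE hqq
        intro hcpt''
        exact ih (G ⧸ Subgroup.center G) hGq _ hH''c hcpt''
      -- the base point moves within its `H'`-coset
      obtain ⟨a, hamk⟩ := QuotientGroup.mk_surjective (p (QuotientGroup.mk 1 : G ⧸ H))
      have hamk : p (QuotientGroup.mk 1 : G ⧸ H) = QuotientGroup.mk a := hamk.symm
      have haH' : a ∈ (Subgroup.center G ⊔ H).topologicalClosure := by
        have h1 : π (p (QuotientGroup.mk 1)) = π (QuotientGroup.mk 1) := by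
          have h := congrFun hπp (QuotientGroup.mk 1 : G ⧸ H)
          rw [hq_id] at h
          exact h
        rw [hamk] at h1
        have h2 : (QuotientGroup.mk a : G ⧸ (Subgroup.center G ⊔ H).topologicalClosure)
            = QuotientGroup.mk 1 := h1
        have := QuotientGroup.eq.mp h2
        simpa using (Subgroup.inv_mem_iff _).mp (by simpa using this)
      -- right translation by `a`
      have hRrel : ∀ b c : G, (QuotientGroup.leftRel H) b c →
          (QuotientGroup.leftRel H) (b * a) (c * a) := by
        intro b c hbc
        rw [QuotientGroup.leftRel_apply] at hbc ⊢
        have hmem := hnorm a haH' _ hbc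
        have heq : (b * a)⁻¹ * (c * a) = a⁻¹ * (b⁻¹ * c) * a := by group
        rwa [heq]
      let Ra : (G ⧸ H) → (G ⧸ H) := Quotient.map' (fun x => x * a) hRrel
      have hRamk : ∀ g : G, Ra (QuotientGroup.mk g) = QuotientGroup.mk (g * a) := fun g => rfl
      have hRacont : Continuous Ra := by
        rw [(QuotientGroup.isQuotientMap_mk H).continuous_iff]
        have h : (Ra ∘ (QuotientGroup.mk : G → G ⧸ H))
            = fun g : G => (QuotientGroup.mk (g * a) : G ⧸ H) := rfl
        rw [h]
        exact QuotientGroup.continuous_mk.comp (continuous_mul_right a)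
      -- `p` commutes with `Ra`
      have hpRa : p ∘ Ra = Ra ∘ p := by
        have hclosed : IsClosed {r : (G ⧸ H) → (G ⧸ H) | r ∘ Ra = Ra ∘ r} := by
          have hrw : {r : (G ⧸ H) → (G ⧸ H) | r ∘ Ra = Ra ∘ r}
              = ⋂ x : G ⧸ H, {r : (G ⧸ H) → (G ⧸ H) | r (Ra x) = Ra (r x)} := by
            ext r
            simp only [Set.mem_setOf_eq, Set.mem_iInter, funext_iff, Function.comp_apply]
          rw [hrw]
          exact isClosed_iInter fun x => isClosed_eq (continuous_apply (Ra x))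
            (hRacont.comp (continuous_apply x))
        have hgen : Set.range (qphi H) ⊆ {r : (G ⧸ H) → (G ⧸ H) | r ∘ Ra = Ra ∘ r} := by
          rintro _ ⟨g, rfl⟩
          funext x
          obtain ⟨b, rfl⟩ := QuotientGroup.mk_surjective x
          show (QuotientGroup.mk (g * (b * a)) : G ⧸ H) = QuotientGroup.mk (g * b * a)
          rw [mul_assoc]
        exact closure_minimal hgen hclosed hvE
      -- conclude
      have h5 : p (QuotientGroup.mk a) = QuotientGroup.mk (a * a) := by
        have h := congrFun hpRa (QuotientGroup.mk 1 : G ⧸ H)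
        simp only [Function.comp_apply] at h
        rw [hRamk 1, one_mul, hamk, hRamk a] at h
        exact h
      have h6 : (QuotientGroup.mk (a * a) : G ⧸ H) = QuotientGroup.mk a := by
        have h := congrFun hvv (QuotientGroup.mk 1 : G ⧸ H)
        simp only [Function.comp_apply] at h
        rw [hamk, h5] at h
        exact h
      have h7 : a ∈ H := by
        have h := QuotientGroup.eq.mp h6
        have heq : (a * a)⁻¹ * a = a⁻¹ := by group
        rw [heq] at h
        exact (Subgroup.inv_mem_iff H).mp h
      show p (QuotientGroup.mk 1) = (QuotientGroup.mk 1 : G ⧸ H)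
      rw [hamk]
      exact QuotientGroup.eq.mpr (by simpa using H.inv_mem h7)
    -- globalize: the idempotent fixes every point
    funext x
    obtain ⟨g, rfl⟩ := QuotientGroup.mk_surjective x
    have h1 := conj_mem_Ell H g huE
    have h2 : (qphi H g⁻¹ ∘ u ∘ qphi H g) ∘ (qphi H g⁻¹ ∘ u ∘ qphi H g)
        = qphi H g⁻¹ ∘ u ∘ qphi H g := by
      funext y
      show g⁻¹ • u (g • (g⁻¹ • (u (g • y)))) = g⁻¹ • u (g • y)
      rw [smul_inv_smul]
      exact congrArg (g⁻¹ • ·) (congrFun huu (g • y))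
    have h3 := hfix _ h1 h2
    have h4 : g⁻¹ • u (g • (QuotientGroup.mk 1 : G ⧸ H)) = QuotientGroup.mk 1 := h3
    have h5 := congrArg (g • ·) h4
    simp only [smul_inv_smul] at h5
    show u (QuotientGroup.mk g) = QuotientGroup.mk g
    have h6 : g • (QuotientGroup.mk 1 : G ⧸ H) = QuotientGroup.mk g := by
      show (QuotientGroup.mk (g * 1) : G ⧸ H) = QuotientGroup.mk g
      rw [mul_one]
    rw [← h6]
    exact h5

section Dynamics

variable {G : Type} [Group G] [TopologicalSpace G] [IsTopologicalGroup G]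

/-- On a compact Hausdorff coset space of a nilpotent topological group, return times of
any point to any of its neighbourhoods are syndetic. -/
theorem syndetic_return (hnil : Group.IsNilpotent G) (H : Subgroup G)
    (hHc : IsClosed (H : Set G)) [CompactSpace (G ⧸ H)]
    (τ : G) (y : G ⧸ H) (U : Set (G ⧸ H)) (hU : IsOpen U) (hy : y ∈ U) :
    ∃ m : ℕ, 0 < m ∧ ∀ N : ℕ, ∃ n, 1 ≤ n ∧ n ≤ m ∧ τ ^ (N + n) • y ∈ U := by
  haveI : T2Space (G ⧸ H) := t2_quotient_of_isClosed H hHc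
  obtain ⟨c, hc⟩ := hnil.nilpotent'
  have hid : ∀ u ∈ Ell H, u ∘ u = u → u = id := fun u hu huu =>
    idem_eq_id c G hc H hHc ‹_› u hu huu
  have hSsub : closure (Set.range fun n : ℕ => qphi H (τ ^ (n+1))) ⊆ Ell H :=
    closure_mono (by rintro _ ⟨n, rfl⟩; exact ⟨_, rfl⟩)
  have hSne : (closure (Set.range fun n : ℕ => qphi H (τ ^ (n+1)))).Nonempty :=
    ⟨qphi H (τ ^ (0+1)), subset_closure ⟨0, rfl⟩⟩
  have hgenmul : ∀ (k : ℕ), ∀ q ∈ closure (Set.range fun n : ℕ => qphi H (τ ^ (n+1))),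
      qphi H (τ ^ (k+1)) ∘ q ∈ closure (Set.range fun n : ℕ => qphi H (τ ^ (n+1))) := by
    intro k q hq
    have hcont : Continuous fun p : (G ⧸ H) → (G ⧸ H) => qphi H (τ ^ (k+1)) ∘ p :=
      myContinuous_comp_left (qphi_cont _ _)
    have hmem := image_closure_subset_closure_image
      (s := Set.range fun n : ℕ => qphi H (τ ^ (n+1))) hcont ⟨q, hq, rfl⟩
    refine closure_mono ?_ hmem
    rintro _ ⟨_, ⟨n, rfl⟩, rfl⟩
    refine ⟨k + n + 1, ?_⟩
    show qphi H (τ ^ (k + n + 1 + 1)) = qphi H (τ ^ (k+1)) ∘ qphi H (τ ^ (n+1))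
    have harith : k + n + 1 + 1 = (k + 1) + (n + 1) := by ring
    rw [harith, pow_add, qphi_mul]
  have hmul : ∀ p ∈ closure (Set.range fun n : ℕ => qphi H (τ ^ (n+1))),
      ∀ q ∈ closure (Set.range fun n : ℕ => qphi H (τ ^ (n+1))),
      p ∘ q ∈ closure (Set.range fun n : ℕ => qphi H (τ ^ (n+1))) := by
    intro p hp q hq
    have hmem := image_closure_subset_closure_image
      (s := Set.range fun n : ℕ => qphi H (τ ^ (n+1))) (myContinuous_comp_right q) ⟨p, hp, rfl⟩
    have hsub : (fun r : (G ⧸ H) → (G ⧸ H) => r ∘ q) ''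
        (Set.range fun n : ℕ => qphi H (τ ^ (n+1))) ⊆
        closure (Set.range fun n : ℕ => qphi H (τ ^ (n+1))) := by
      rintro _ ⟨_, ⟨n, rfl⟩, rfl⟩; exact hgenmul n q hq
    exact closure_minimal hsub isClosed_closure hmem
  obtain ⟨e, heS, hee⟩ := exists_idem_of_compact_subsemigroup _ hSne isClosed_closure hmul
  have hidS : id ∈ closure (Set.range fun n : ℕ => qphi H (τ ^ (n+1))) :=
    hid e (hSsub heS) hee ▸ heS
  have hMcomp : IsCompact ((fun p : (G ⧸ H) → (G ⧸ H) => p y) ''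
      closure (Set.range fun n : ℕ => qphi H (τ ^ (n+1)))) :=
    (isClosed_closure.isCompact).image (continuous_apply y)
  have hback : ∀ z ∈ (fun p : (G ⧸ H) → (G ⧸ H) => p y) ''
      closure (Set.range fun n : ℕ => qphi H (τ ^ (n+1))),
      ∃ n : ℕ, τ ^ (n+1) • z ∈ U := by
    rintro _ ⟨p, hpS, rfl⟩
    have hmulSp : ∀ r₁ ∈ (fun q : (G ⧸ H) → (G ⧸ H) => q ∘ p) ''
        closure (Set.range fun n : ℕ => qphi H (τ ^ (n+1))),
        ∀ r₂ ∈ (fun q : (G ⧸ H) → (G ⧸ H) => q ∘ p) ''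
        closure (Set.range fun n : ℕ => qphi H (τ ^ (n+1))),
        r₁ ∘ r₂ ∈ (fun q : (G ⧸ H) → (G ⧸ H) => q ∘ p) ''
        closure (Set.range fun n : ℕ => qphi H (τ ^ (n+1))) := by
      rintro _ ⟨q₁, hq₁, rfl⟩ _ ⟨q₂, hq₂, rfl⟩
      exact ⟨q₁ ∘ (p ∘ q₂), hmul _ hq₁ _ (hmul _ hpS _ hq₂), rfl⟩
    have hSpclosed : IsClosed ((fun q : (G ⧸ H) → (G ⧸ H) => q ∘ p) ''
        closure (Set.range fun n : ℕ => qphi H (τ ^ (n+1)))) :=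
      ((isClosed_closure.isCompact).image (myContinuous_comp_right p)).isClosed
    have hSpne : ((fun q : (G ⧸ H) → (G ⧸ H) => q ∘ p) ''
        closure (Set.range fun n : ℕ => qphi H (τ ^ (n+1)))).Nonempty :=
      ⟨id ∘ p, ⟨id, hidS, rfl⟩⟩
    obtain ⟨w, hwSp, hww⟩ := exists_idem_of_compact_subsemigroup _ hSpne hSpclosed hmulSp
    have hwS : w ∈ closure (Set.range fun n : ℕ => qphi H (τ ^ (n+1))) := by
      obtain ⟨q, hq, rfl⟩ := hwSp; exact hmul _ hq _ hpS
    have hwid : w = id := hid w (hSsub hwS) hww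
    obtain ⟨q, hqS, hqp⟩ := hwSp
    have hqy : q (p y) = y := congrFun (hqp.trans hwid) y
    have hopen : IsOpen {r : (G ⧸ H) → (G ⧸ H) | r (p y) ∈ U} :=
      hU.preimage (continuous_apply (p y))
    have hqW : q ∈ {r : (G ⧸ H) → (G ⧸ H) | r (p y) ∈ U} := by
      show q (p y) ∈ U; rw [hqy]; exact hy
    obtain ⟨r, hrW, n, rfl⟩ :=
      mem_closure_iff.mp hqS _ hopen hqW
    exact ⟨n, hrW⟩
  have hcover : ((fun p : (G ⧸ H) → (G ⧸ H) => p y) ''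
      closure (Set.range fun n : ℕ => qphi H (τ ^ (n+1)))) ⊆
      ⋃ n : ℕ, (fun z : G ⧸ H => τ ^ (n+1) • z) ⁻¹' U := by
    intro z hz
    obtain ⟨n, hn⟩ := hback z hz
    exact Set.mem_iUnion.mpr ⟨n, hn⟩
  obtain ⟨t, ht⟩ := hMcomp.elim_finite_subcover (fun n : ℕ => (fun z : G ⧸ H => τ ^ (n+1) • z) ⁻¹' U)
    (fun n => hU.preimage (continuous_const_smul _)) hcover
  refine ⟨(t.sup id) + 1, Nat.succ_pos _, ?_⟩
  intro N
  have hzM : τ ^ N • y ∈ (fun p : (G ⧸ H) → (G ⧸ H) => p y) ''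
      closure (Set.range fun n : ℕ => qphi H (τ ^ (n+1))) := by
    cases N with
    | zero => simpa using ⟨id, hidS, rfl⟩
    | succ k => exact ⟨qphi H (τ ^ (k+1)), subset_closure ⟨k, rfl⟩, rfl⟩
  obtain ⟨n, hnt, hn⟩ := Set.mem_iUnion₂.mp (ht hzM)
  refine ⟨n + 1, Nat.succ_le_succ (Nat.zero_le n), Nat.succ_le_succ (Finset.le_sup (f := id) hnt), ?_⟩
  have harith : N + (n + 1) = (n + 1) + N := by ring
  rw [harith, pow_add, mul_smul]
  exact hn

end Dynamics


section Charted

/-- A topological group which is a charted space over a Hausdorff model is Hausdorff. -/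
theorem charted_t2 {E G : Type} [NormedAddCommGroup E] [Group G] [TopologicalSpace G]
    [IsTopologicalGroup G] [ChartedSpace E G] : T2Space G := by
  haveI : T0Space G := by
    refine (t0Space_iff_inseparable G).mpr fun x y h => ?_
    have hx := mem_chart_source E x
    have hy : y ∈ (chartAt E x).source := (h.mem_open_iff (chartAt E x).open_source).mp hx
    refine (chartAt E x).injOn hx hy (by_contra fun hv => ?_)
    obtain ⟨A, B, hA, hB, hxA, hyB, hAB⟩ := t2_separation hv
    have hU : IsOpen ((chartAt E x).source ∩ (chartAt E x) ⁻¹' A) :=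
      (chartAt E x).isOpen_inter_preimage hA
    have hyA : y ∈ (chartAt E x).source ∩ (chartAt E x) ⁻¹' A :=
      (h.mem_open_iff hU).mp ⟨hx, hxA⟩
    have hmem : (chartAt E x) y ∈ A ∩ B := ⟨hyA.2, hyB⟩
    rw [Set.disjoint_iff_inter_eq_empty.mp hAB] at hmem
    exact hmem
  infer_instance

end Charted

/-- A nilsequence whose averages of absolute values tend to zero
vanishes identically. -/
theorem nilsequence_null_eq_zero (ψ : ℕ → ℂ) (hψ : IsNilsequence ψ)
    (h0 : Tendsto (fun N : ℕ => (N : ℝ)⁻¹ * ∑ n ∈ Finset.Icc 1 N, ‖ψ n‖)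
      atTop (nhds 0)) :
    ∀ n : ℕ, ψ n = 0 := by
  intro k
  obtain ⟨Ψ, hbasic, hunif⟩ := hψ
  have key : ∀ ε : ℝ, 0 < ε → ‖ψ k‖ ≤ 3 * ε := by
    intro ε hε
    obtain ⟨j, hj⟩ := ((Metric.tendstoUniformly_iff.mp hunif) ε hε).exists
    obtain ⟨Nm, f, τ, x, hform⟩ := hbasic j
    haveI hT2G : T2Space Nm.G := charted_t2 (E := Nm.E)
    haveI := Nm.discrete
    have hΓclosed : IsClosed ((Nm.Γ : Subgroup Nm.G) : Set Nm.G) :=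
      Subgroup.isClosed_of_discrete
    set y : Nm.Space := τ ^ k • x with hydef
    set U : Set Nm.Space := f ⁻¹' Metric.ball (f y) ε with hUdef
    have hUopen : IsOpen U := Metric.isOpen_ball.preimage f.continuous
    have hyU : y ∈ U := by
      rw [hUdef]
      simpa using hε
    obtain ⟨m, hm, hret⟩ := syndetic_return Nm.nilpotent Nm.Γ hΓclosed τ y U hUopen hyU
    choose g hg1 hg2 hg3 using hret
    set a : ℕ → ℕ := fun i => i * m + g (i * m) with hadef
    have ha : ∀ i, a i = i * m + g (i * m) := fun i => rfl
    have ha_lb : ∀ i, i * m < a i := fun i => by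
      rw [ha i]
      have := hg1 (i * m); omega
    have ha_ub : ∀ i, a i ≤ (i + 1) * m := fun i => by
      rw [ha i, add_one_mul]
      have := hg2 (i * m); omega
    have hstrict : StrictMono a := strictMono_nat_of_lt_succ fun i =>
      lt_of_le_of_lt (ha_ub i) (ha_lb (i + 1))
    have hval : ∀ i : ℕ, ‖ψ k‖ - 3 * ε ≤ ‖ψ (a i + k)‖ := by
      intro i
      have hU3 : τ ^ (a i) • y ∈ U := hg3 (i * m)
      have hball : dist (f (τ ^ (a i) • y)) (f y) < ε := by
        rw [hUdef] at hU3
        exact hU3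
      have hrw1 : f (τ ^ (a i) • y) = Ψ j (a i + k) := by
        rw [hform (a i + k), hydef, ← mul_smul, ← pow_add]
      have hrw2 : f y = Ψ j k := by rw [hform k, hydef]
      rw [hrw1, hrw2] at hball
      have hd : dist (ψ k) (ψ (a i + k)) < 3 * ε := by
        have htri := dist_triangle4 (ψ k) (Ψ j k) (Ψ j (a i + k)) (ψ (a i + k))
        have h2 := hj (a i + k)
        have h3 := hj k
        have h4 : dist (Ψ j k) (Ψ j (a i + k)) < ε := by rwa [dist_comm] at hball
        have h5 : dist (Ψ j (a i + k)) (ψ (a i + k)) < ε := by rwa [dist_comm] at h2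
        linarith
      have hnorm : ‖ψ k‖ - ‖ψ (a i + k)‖ ≤ dist (ψ k) (ψ (a i + k)) := by
        rw [Complex.dist_eq]
        exact norm_sub_norm_le _ _
      linarith
    by_cases hc : ‖ψ k‖ - 3 * ε ≤ 0
    · linarith
    push_neg at hc
    exfalso
    set c : ℝ := ‖ψ k‖ - 3 * ε with hcdef
    have hsum : ∀ K : ℕ, (K : ℝ) * c ≤ ∑ n ∈ Finset.Icc 1 (K * m + k), ‖ψ n‖ := by
      intro K
      have hsubset : (Finset.range K).image (fun i => a i + k) ⊆ Finset.Icc 1 (K * m + k) := by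
        intro n hn
        obtain ⟨i, hi, rfl⟩ := Finset.mem_image.mp hn
        rw [Finset.mem_range] at hi
        rw [Finset.mem_Icc]
        have h1 := ha_lb i
        have h2 := ha_ub i
        have h3 : (i + 1) * m ≤ K * m := Nat.mul_le_mul_right m (by omega)
        omega
      calc (K : ℝ) * c = ∑ _i ∈ Finset.range K, c := by
            rw [Finset.sum_const, Finset.card_range, nsmul_eq_mul]
        _ ≤ ∑ i ∈ Finset.range K, ‖ψ (a i + k)‖ :=
            Finset.sum_le_sum fun i _ => hval i
        _ = ∑ n ∈ (Finset.range K).image (fun i => a i + k), ‖ψ n‖ :=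
            (Finset.sum_image (f := fun n => ‖ψ n‖) (g := fun i => a i + k)
              fun i _ i' _ h => hstrict.injective (Nat.add_right_cancel h)).symm
        _ ≤ ∑ n ∈ Finset.Icc 1 (K * m + k), ‖ψ n‖ :=
            Finset.sum_le_sum_of_subset_of_nonneg hsubset
              (fun n _ _ => norm_nonneg _)
    have hsub_t : Tendsto (fun K : ℕ => K * m + k) atTop atTop := by
      apply tendsto_atTop_mono (fun K : ℕ => ?_) tendsto_id
      calc (K : ℕ) = K * 1 := (mul_one K).symm
        _ ≤ K * m + k := by
            have := Nat.mul_le_mul_left K hm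
            omega
    have hlim0 : Tendsto (fun K : ℕ => ((K * m + k : ℕ) : ℝ)⁻¹ *
        ∑ n ∈ Finset.Icc 1 (K * m + k), ‖ψ n‖) atTop (nhds 0) :=
      h0.comp hsub_t
    have hlow : Tendsto (fun K : ℕ => ((K * m + k : ℕ) : ℝ)⁻¹ * ((K : ℝ) * c)) atTop
        (nhds (c * ((m : ℝ))⁻¹)) := by
      have h1 : Tendsto (fun K : ℕ => (m : ℝ) + (k : ℝ) * ((K : ℕ) : ℝ)⁻¹) atTop
          (nhds ((m : ℝ) + (k : ℝ) * 0)) :=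
        tendsto_const_nhds.add (tendsto_const_nhds.mul tendsto_inv_atTop_nhds_zero_nat)
      rw [mul_zero, add_zero] at h1
      have hmne : (m : ℝ) ≠ 0 := by positivity
      have h2 := h1.inv₀ hmne
      have h3 : Tendsto (fun K : ℕ => c * ((m : ℝ) + (k : ℝ) * ((K : ℕ) : ℝ)⁻¹)⁻¹) atTop
          (nhds (c * ((m : ℝ))⁻¹)) :=
        Tendsto.mul (tendsto_const_nhds (x := c) (f := atTop)) h2
      refine h3.congr' ?_
      filter_upwards [Filter.eventually_ge_atTop 1] with K hK
      have hKne : ((K : ℕ) : ℝ) ≠ 0 := Nat.cast_ne_zero.mpr (by omega)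
      have hden : ((K * m + k : ℕ) : ℝ) = (K : ℝ) * m + k := by push_cast; ring
      rw [hden]
      have hdenne : (K : ℝ) * m + k ≠ 0 := by positivity
      field_simp
    have hle : c * ((m : ℝ))⁻¹ ≤ 0 := by
      refine le_of_tendsto_of_tendsto' hlow hlim0 fun K => ?_
      have hnn : (0 : ℝ) ≤ ((K * m + k : ℕ) : ℝ)⁻¹ := by positivity
      exact mul_le_mul_of_nonneg_left (hsum K) hnn
    have hpos : 0 < c * ((m : ℝ))⁻¹ := by
      apply mul_pos hc
      have : (0 : ℝ) < (m : ℝ) := by positivity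
      positivity
    linarith
  have habs : ‖ψ k‖ = 0 := by
    by_contra h
    have hpos : 0 < ‖ψ k‖ :=
      lt_of_le_of_ne (norm_nonneg _) (Ne.symm h)
    have := key (‖ψ k‖ / 4) (by linarith)
    linarith
  exact norm_eq_zero.mp habs
end

section
/- The nil+null decomposition of a sequence is unique: if ψ₁, ψ₂ are nilsequences and ε₁, ε₂ are null sequences such that ψ₁(n) + ε₁(n) = ψ₂(n) + ε₂(n) for all n ∈ ℕ, then ψ₁(n) = ψ₂(n) and ε₁(n) = ε₂(n) for all n ∈ ℕ. -/
open Filter MeasureTheory Topology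

section NilNullHelpers

attribute [local instance] Ultrafilter.add Ultrafilter.addSemigroup


noncomputable def ulim {X : Type*} [TopologicalSpace X] [CompactSpace X]
    (p : Ultrafilter ℕ) (f : ℕ → X) : X :=
  (isCompact_univ.ultrafilter_le_nhds (p.map f) (by simp)).choose

theorem ulim_spec {X : Type*} [TopologicalSpace X] [CompactSpace X] (p : Ultrafilter ℕ)
    (f : ℕ → X) : Tendsto f ↑p (𝓝 (ulim p f)) :=
  (isCompact_univ.ultrafilter_le_nhds (p.map f) (by simp)).choose_spec.2

theorem tendsto_add_ultrafilter {X : Type*} [TopologicalSpace X] {f g : ℕ → X} {c : X}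
    (p q : Ultrafilter ℕ)
    (h1 : ∀ m, Tendsto (fun n => f (m + n)) ↑q (𝓝 (g m)))
    (h2 : Tendsto g ↑p (𝓝 c)) :
    Tendsto f ↑(p + q) (𝓝 c) := by
  intro s hs
  obtain ⟨t, hts, hto, hct⟩ := mem_nhds_iff.mp hs
  have key : ∀ᶠ k in ↑(p + q), f k ∈ t := by
    rw [Ultrafilter.eventually_add]
    filter_upwards [h2 (hto.mem_nhds hct)] with m hm
    exact h1 m (hto.mem_nhds hm)
  exact Filter.mem_of_superset key fun k hk => hts hk

theorem t2space_coset {G : Type*} [Group G] [TopologicalSpace G] [IsTopologicalGroup G]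
    (P : Subgroup G) (hP : IsClosed (P : Set G)) : T2Space (G ⧸ P) := by
  constructor
  intro a b hab
  obtain ⟨x, rfl⟩ := QuotientGroup.mk_surjective a
  obtain ⟨y, rfl⟩ := QuotientGroup.mk_surjective b
  have hxy : x⁻¹ * y ∉ P := fun h => hab (QuotientGroup.eq.mpr h)
  have hW : IsOpen ((fun q : G × G => q.1⁻¹ * q.2) ⁻¹' ((P : Set G)ᶜ)) :=
    hP.isOpen_compl.preimage (by continuity)
  obtain ⟨u, v, hu, hv, hxu, hyv, huv⟩ := isOpen_prod_iff.mp hW x y hxy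
  refine ⟨QuotientGroup.mk '' u, QuotientGroup.mk '' v,
    QuotientGroup.isOpenMap_coe u hu, QuotientGroup.isOpenMap_coe v hv,
    ⟨x, hxu, rfl⟩, ⟨y, hyv, rfl⟩, ?_⟩
  rw [Set.disjoint_left]
  rintro z ⟨x', hx', rfl⟩ ⟨y', hy', hz⟩
  exact huv (Set.mk_mem_prod hx' hy') (QuotientGroup.eq.mp hz.symm)

/-- **Key recurrence theorem**: for a nilpotent topological group `G`, a closed subgroup `P`
with compact quotient, every point of `G ⧸ P` is fixed by every idempotent-ultrafilter limit
of the orbit under translation. -/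
theorem idempotent_rec {G : Type*} [Group G] [TopologicalSpace G] [IsTopologicalGroup G]
    (hnil : Group.IsNilpotent G) (P : Subgroup G) (hP : IsClosed (P : Set G))
    (hcpt : CompactSpace (G ⧸ P)) (p : Ultrafilter ℕ) (hp : p + p = p)
    (τ : G) (y : G ⧸ P) :
    Tendsto (fun n => τ ^ n • y) ↑p (𝓝 y) := by
  obtain ⟨k₀, hk₀⟩ := nilpotent_iff_lowerCentralSeries.mp hnil
  suffices H : ∀ k, ∀ P : Subgroup G, IsClosed (P : Set G) → CompactSpace (G ⧸ P) →
      Subgroup.lowerCentralSeries (⊤ : Subgroup G) k ≤ P → ∀ τ : G, ∀ y : G ⧸ P,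
      Tendsto (fun n => τ ^ n • y) ↑p (𝓝 y) by
    exact H k₀ P hP hcpt (hk₀ ▸ bot_le) τ y
  intro k
  induction k with
  | zero =>
    intro P hPc hcpt hle τ y
    have hPtop : P = ⊤ := top_le_iff.mp (by simpa using hle)
    subst hPtop
    haveI := QuotientGroup.subsingleton_quotient_top (G := G)
    have hy : (fun n : ℕ => τ ^ n • y) = fun _ => y := funext fun n => Subsingleton.elim _ _
    rw [hy]
    exact tendsto_const_nhds
  | succ k ih =>
    intro P hPc hcpt hle τ y
    haveI := hcpt
    haveI : T2Space (G ⧸ P) := t2space_coset P hPc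
    set Z : Subgroup G := Subgroup.lowerCentralSeries (⊤ : Subgroup G) k with hZdef
    set Q : Subgroup G := (Z ⊔ P).topologicalClosure with hQdef
    have hQc : IsClosed (Q : Set G) := Subgroup.isClosed_topologicalClosure _
    have hZQ : Z ≤ Q := le_trans le_sup_left (Subgroup.le_topologicalClosure _)
    have hPQ : P ≤ Q := le_trans le_sup_right (Subgroup.le_topologicalClosure _)
    -- the projection map
    have hrel : ∀ a b : G, QuotientGroup.leftRel P a b → QuotientGroup.leftRel Q (id a) (id b) := by
      intro a b hab
      rw [QuotientGroup.leftRel_apply] at hab ⊢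
      exact hPQ hab
    let π : G ⧸ P → G ⧸ Q := Quotient.map' id hrel
    have hπcont : Continuous π := continuous_id.quotient_map' _
    have hπmk : ∀ a : G, π (QuotientGroup.mk a) = QuotientGroup.mk a := fun a => rfl
    have hπsurj : Function.Surjective π := by
      intro b
      obtain ⟨a, rfl⟩ := QuotientGroup.mk_surjective b
      exact ⟨QuotientGroup.mk a, rfl⟩
    haveI : CompactSpace (G ⧸ Q) :=
      ⟨by rw [← Set.range_eq_univ.mpr hπsurj]; exact isCompact_range hπcont⟩
    haveI : T2Space (G ⧸ Q) := t2space_coset Q hQc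
    have hIH : ∀ τ' : G, ∀ y' : G ⧸ Q, Tendsto (fun n => τ' ^ n • y') ↑p (𝓝 y') :=
      ih Q hQc ‹_› hZQ
    obtain ⟨g, rfl⟩ := QuotientGroup.mk_surjective y
    set f : ℕ → G ⧸ P := fun n => τ ^ n • (QuotientGroup.mk g : G ⧸ P) with hfdef
    set x₁ : G ⧸ P := ulim p f with hx₁def
    have hx₁ : Tendsto f ↑p (𝓝 x₁) := ulim_spec p f
    -- equivariance of π
    have hπequiv : ∀ (h : G) (q : G ⧸ P), π (h • q) = h • π q := by
      intro h q
      obtain ⟨a, rfl⟩ := QuotientGroup.mk_surjective q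
      rw [MulAction.Quotient.smul_mk, hπmk, hπmk, MulAction.Quotient.smul_mk]
    -- Step A : π x₁ = π y
    have hπx₁ : π x₁ = QuotientGroup.mk g := by
      have h1 : Tendsto (fun n => π (f n)) ↑p (𝓝 (π x₁)) := (hπcont.tendsto x₁).comp hx₁
      have h2 : (fun n => π (f n)) = fun n => τ ^ n • (QuotientGroup.mk g : G ⧸ Q) := by
        funext n
        rw [hfdef]
        simp only []
        rw [hπequiv, hπmk]
      rw [h2] at h1
      exact tendsto_nhds_unique h1 (hIH τ (QuotientGroup.mk g))
    obtain ⟨h, hh⟩ : ∃ h : G, (QuotientGroup.mk h : G ⧸ P) = x₁ := QuotientGroup.mk_surjective x₁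
    set u : G := g⁻¹ * h with hudef
    have hu : u ∈ Q := by
      have : (QuotientGroup.mk g : G ⧸ Q) = QuotientGroup.mk h := by
        rw [← hπmk h, hh, hπx₁]
      exact QuotientGroup.eq.mp this
    have hx₁gu : x₁ = QuotientGroup.mk (g * u) := by
      rw [hudef, ← mul_assoc, mul_inv_cancel, one_mul, hh]
    -- conjugation stability
    have hconj : ∀ v ∈ Q, ∀ ρ ∈ P, v⁻¹ * ρ * v ∈ P := by
      have hsub : (Q : Set G) ⊆ {v : G | ∀ ρ ∈ P, v⁻¹ * ρ * v ∈ P} := by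
        have hDc : IsClosed {v : G | ∀ ρ ∈ P, v⁻¹ * ρ * v ∈ P} := by
          have : {v : G | ∀ ρ ∈ P, v⁻¹ * ρ * v ∈ P} =
              ⋂ (ρ : G) (_ : ρ ∈ P), (fun v : G => v⁻¹ * ρ * v) ⁻¹' (P : Set G) := by
            ext v; simp [Set.mem_iInter]
          rw [this]
          exact isClosed_iInter fun ρ => isClosed_iInter fun _ => hPc.preimage (by continuity)
        have hQcl : (Q : Set G) = closure ((Z ⊔ P : Subgroup G) : Set G) := rfl
        rw [hQcl]
        refine closure_minimal ?_ hDc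
        intro w hw
        rw [Subgroup.normal_mul Z P] at hw
        obtain ⟨z, hz, σ, hσ, rfl⟩ := hw
        intro ρ hρ
        have hcom : z⁻¹ * ρ * z * ρ⁻¹ ∈ Subgroup.lowerCentralSeries (⊤ : Subgroup G) (k + 1) := by
          rw [lowerCentralSeries_succ]
          exact Subgroup.subset_closure ⟨z⁻¹, inv_mem hz, ρ, trivial, by group⟩
        have hzρz : z⁻¹ * ρ * z ∈ P := by
          have : z⁻¹ * ρ * z = (z⁻¹ * ρ * z * ρ⁻¹) * ρ := by group
          rw [this]
          exact mul_mem (hle hcom) hρ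
        have : (z * σ)⁻¹ * ρ * (z * σ) = σ⁻¹ * (z⁻¹ * ρ * z) * σ := by group
        rw [this]
        exact mul_mem (mul_mem (inv_mem hσ) hzρz) hσ
      exact fun v hv => hsub hv
    -- the right translation map R
    have hrelR : ∀ a b : G, QuotientGroup.leftRel P a b →
        QuotientGroup.leftRel P (a * u) (b * u) := by
      intro a b hab
      rw [QuotientGroup.leftRel_apply] at hab ⊢
      have : (a * u)⁻¹ * (b * u) = u⁻¹ * (a⁻¹ * b) * u := by group
      rw [this]
      exact hconj u hu _ hab
    let R : G ⧸ P → G ⧸ P := Quotient.map' (· * u) hrelR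
    have hRcont : Continuous R := (continuous_id.mul continuous_const).quotient_map' _
    have hRmk : ∀ a : G, R (QuotientGroup.mk a) = QuotientGroup.mk (a * u) := fun a => rfl
    -- idempotence : the orbit of x₁ tends to x₁
    have hF1 : Tendsto (fun n => τ ^ n • x₁) ↑p (𝓝 x₁) := by
      set g2 : ℕ → G ⧸ P := fun m => τ ^ m • x₁ with hg2def
      have hg2 : Tendsto g2 ↑p (𝓝 (ulim p g2)) := ulim_spec p g2
      have hcomp : Tendsto f ↑(p + p) (𝓝 (ulim p g2)) := by
        refine tendsto_add_ultrafilter p p (fun m => ?_) hg2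
        have : (fun n => f (m + n)) = fun n => (τ ^ m) • f n := by
          funext n
          rw [hfdef]
          simp only []
          rw [pow_add, mul_smul]
        rw [this]
        exact hx₁.const_smul (τ ^ m)
      rw [hp] at hcomp
      have : ulim p g2 = x₁ := tendsto_nhds_unique hcomp hx₁
      rwa [this] at hg2
    -- the orbit of x₁ also tends to R x₁
    have hF2 : Tendsto (fun n => τ ^ n • x₁) ↑p (𝓝 (R x₁)) := by
      have h1 : Tendsto (fun n => R (f n)) ↑p (𝓝 (R x₁)) := (hRcont.tendsto x₁).comp hx₁
      have h2 : (fun n => R (f n)) = fun n => τ ^ n • x₁ := by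
        funext n
        rw [hx₁gu]
        show QuotientGroup.mk (τ ^ n * g * u) = QuotientGroup.mk (τ ^ n * (g * u))
        rw [mul_assoc]
      rwa [h2] at h1
    have hRx₁ : R x₁ = x₁ := tendsto_nhds_unique hF2 hF1
    -- conclude u ∈ P
    have huP : u ∈ P := by
      have : (QuotientGroup.mk (g * u * u) : G ⧸ P) = QuotientGroup.mk (g * u) := by
        rw [← hRmk (g * u), ← hx₁gu, hRx₁, hx₁gu]
      have := QuotientGroup.eq.mp this
      have heq : (g * u * u)⁻¹ * (g * u) = u⁻¹ := by group
      rw [heq] at this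
      simpa using inv_mem this
    have hx₁y : x₁ = QuotientGroup.mk g := by
      rw [hx₁gu]
      exact QuotientGroup.eq.mpr (by simpa using inv_mem huP)
    rwa [hx₁y] at hx₁



/-- If the orbit sequence returns to `x` along every idempotent ultrafilter, then visits
to any neighborhood of `x` are syndetic. -/
theorem syndetic_of_idempotent_rec {X : Type*} [TopologicalSpace X]
    (a : ℕ → X) (x : X) (h : ∀ p : Ultrafilter ℕ, p + p = p → Tendsto a ↑p (𝓝 x))
    {U : Set X} (hU : IsOpen U) (hx : x ∈ U) :
    ∃ N, ∀ m, ∃ k ≤ N, a (m + k) ∈ U := by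
  by_contra hcon
  push_neg at hcon
  set C : ℕ → Set ℕ := fun m => {n | a (m + n) ∉ U} with hC
  -- finite intersection property
  have hFIP : ∀ s : Finset ℕ, (⋂ m ∈ s, C m).Nonempty := by
    intro s
    obtain ⟨m₀, hm₀⟩ := hcon (s.sup id)
    refine ⟨m₀, Set.mem_biInter fun m hm => ?_⟩
    have h1 : a (m₀ + m) ∉ U := hm₀ m (Finset.le_sup (f := id) hm)
    show a (m + m₀) ∉ U
    rwa [add_comm]
  -- a nonempty closed subsemigroup of ultrafilters
  set S : Set (Ultrafilter ℕ) := {q | ∀ m, C m ∈ q} with hS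
  have hSne : S.Nonempty := by
    set F : Filter ℕ := ⨅ s : Finset ℕ, Filter.principal (⋂ m ∈ s, C m) with hF
    have hdir : Directed (· ≥ ·) fun s : Finset ℕ => Filter.principal (⋂ m ∈ s, C m) := by
      intro s t
      refine ⟨s ∪ t, ?_, ?_⟩
      · exact Filter.principal_mono.mpr
          (Set.biInter_subset_biInter_left (fun m hm => Finset.mem_union_left t hm))
      · exact Filter.principal_mono.mpr
          (Set.biInter_subset_biInter_left (fun m hm => Finset.mem_union_right s hm))
    haveI hFne : F.NeBot := by
      refine Filter.iInf_neBot_of_directed hdir fun s => ?_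
      exact Filter.principal_neBot_iff.mpr (hFIP s)
    refine ⟨Ultrafilter.of F, fun m => ?_⟩
    have h1 : F ≤ Filter.principal (C m) := by
      refine le_trans (iInf_le _ ({m} : Finset ℕ)) ?_
      simp
    exact Filter.le_principal_iff.mp (le_trans (Ultrafilter.of_le F) h1)
  have hScl : IsClosed S := by
    have : S = ⋂ m, {q : Ultrafilter ℕ | C m ∈ q} := by
      ext q; simp [hS, Set.mem_iInter]
    rw [this]
    exact isClosed_iInter fun m => ultrafilter_isClosed_basic (C m)
  have hSsemi : ∀ q₁ ∈ S, ∀ q₂ ∈ S, q₁ + q₂ ∈ S := by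
    intro q₁ hq₁ q₂ hq₂ m
    have : ∀ᶠ i in ↑q₁, ∀ᶠ j in ↑q₂, i + j ∈ C m := by
      filter_upwards with i
      have h2 : C (m + i) ∈ q₂ := hq₂ (m + i)
      filter_upwards [h2] with j hj
      show a (m + (i + j)) ∉ U
      have : m + (i + j) = m + i + j := by ring
      rw [this]
      exact hj
    exact (Ultrafilter.eventually_add q₁ q₂ _).mpr this
  obtain ⟨u, huS, huid⟩ :=
    exists_idempotent_in_compact_add_subsemigroup Ultrafilter.continuous_add_left S hSne
      hScl.isCompact hSsemi
  have h1 : {n | a n ∈ U} ∈ u := (h u huid).eventually (hU.eventually_mem hx)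
  have h2 : {n | a n ∉ U} ∈ u := by
    have := huS 0
    have hC0 : C 0 = {n | a n ∉ U} := by
      ext n; simp [hC]
    rwa [hC0] at this
  have hinter := Filter.inter_mem h1 h2
  have hempty : {n | a n ∈ U} ∩ {n | a n ∉ U} = (∅ : Set ℕ) := by
    ext n
    simp only [Set.mem_inter_iff, Set.mem_setOf_eq, Set.mem_empty_iff_false, iff_false]
    tauto
  rw [hempty] at hinter
  exact Filter.empty_notMem (↑u : Filter ℕ) hinter



theorem not_null_of_syndetic_large (ψ : ℕ → ℂ) (c : ℝ) (hc : 0 < c) (N : ℕ)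
    (hsyn : ∀ m, ∃ k ≤ N, c ≤ ‖ψ (m + k + 1)‖)
    (hnull : Tendsto (fun M : ℕ => (M : ℝ)⁻¹ * ∑ n ∈ Finset.range M, ‖ψ (n + 1)‖)
      atTop (𝓝 0)) : False := by
  choose k hk1 hk2 using hsyn
  set ε : ℝ := c / (N + 1) with hε
  have hεpos : 0 < ε := by positivity
  obtain ⟨M₁, hM₁⟩ := (Metric.tendsto_atTop.mp hnull) ε hεpos
  set J : ℕ := M₁ + 1 with hJ
  set M : ℕ := J * (N + 1) with hM
  have hJpos : 0 < J := Nat.succ_pos _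
  have hMM₁ : M₁ ≤ M := by
    calc M₁ ≤ J := Nat.le_succ _
    _ ≤ J * (N + 1) := Nat.le_mul_of_pos_right _ (Nat.succ_pos _)
  -- the hit positions
  set e : ℕ → ℕ := fun j => j * (N + 1) + k (j * (N + 1)) with he
  have hkN : ∀ j, k (j * (N + 1)) ≤ N := fun j => hk1 _
  have hediv : ∀ j, e j / (N + 1) = j := by
    intro j
    have hcomm : e j = k (j * (N + 1)) + j * (N + 1) := by rw [he]; exact add_comm _ _
    rw [hcomm, Nat.add_mul_div_right _ _ (Nat.succ_pos N),
      Nat.div_eq_of_lt (Nat.lt_succ_of_le (hkN j)), zero_add]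
  have hinj : Set.InjOn e ↑(Finset.range J) := by
    intro j₁ _ j₂ _ hj
    rw [← hediv j₁, ← hediv j₂, hj]
  set s : Finset ℕ := (Finset.range J).image e with hs
  have hcard : s.card = J := by
    rw [hs, Finset.card_image_of_injOn hinj, Finset.card_range]
  have hsub : s ⊆ Finset.range M := by
    intro t ht
    rw [hs, Finset.mem_image] at ht
    obtain ⟨j, hjJ, rfl⟩ := ht
    rw [Finset.mem_range] at hjJ ⊢
    calc e j ≤ j * (N + 1) + N := Nat.add_le_add_left (hkN j) _
    _ < (j + 1) * (N + 1) := by ring_nf; omega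
    _ ≤ J * (N + 1) := Nat.mul_le_mul_right _ hjJ
  have hlower : (J : ℝ) * c ≤ ∑ n ∈ Finset.range M, ‖ψ (n + 1)‖ := by
    have h1 : ∀ t ∈ s, c ≤ ‖ψ (t + 1)‖ := by
      intro t ht
      rw [hs, Finset.mem_image] at ht
      obtain ⟨j, _, rfl⟩ := ht
      exact hk2 _
    have h2 : (s.card : ℝ) • c ≤ ∑ t ∈ s, ‖ψ (t + 1)‖ := by
      exact Finset.card_nsmul_le_sum s _ c h1 |>.trans_eq' (by rw [nsmul_eq_mul]; norm_num)
    have h3 : ∑ t ∈ s, ‖ψ (t + 1)‖ ≤ ∑ n ∈ Finset.range M, ‖ψ (n + 1)‖ :=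
      Finset.sum_le_sum_of_subset_of_nonneg hsub fun i _ _ => norm_nonneg _
    calc (J : ℝ) * c = (s.card : ℝ) • c := by rw [hcard, smul_eq_mul]
    _ ≤ ∑ t ∈ s, ‖ψ (t + 1)‖ := h2
    _ ≤ _ := h3
  have hMpos : (0 : ℝ) < M := by
    have : 0 < M := Nat.mul_pos hJpos (Nat.succ_pos N)
    exact_mod_cast this
  have havg : ε ≤ (M : ℝ)⁻¹ * ∑ n ∈ Finset.range M, ‖ψ (n + 1)‖ := by
    have hMr : (M : ℝ) = (J : ℝ) * ((N : ℝ) + 1) := by rw [hM]; push_cast; ring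
    have heq : (M : ℝ)⁻¹ * ((J : ℝ) * c) = ε := by
      rw [hε, hMr]
      have hJr : (0 : ℝ) < (J : ℝ) := by exact_mod_cast hJpos
      field_simp
    rw [← heq]
    exact mul_le_mul_of_nonneg_left hlower (by positivity)
  have hlt := hM₁ M hMM₁
  rw [Real.dist_eq, sub_zero] at hlt
  have habs : |(M : ℝ)⁻¹ * ∑ n ∈ Finset.range M, ‖ψ (n + 1)‖| =
      (M : ℝ)⁻¹ * ∑ n ∈ Finset.range M, ‖ψ (n + 1)‖ := by
    apply abs_of_nonneg
    positivity
  rw [habs] at hlt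
  linarith

/-- Shifted values of a basic nilsequence return to their value along idempotent ultrafilters. -/
theorem basic_nilsequence_rec {Φ : ℕ → ℂ} (hΦ : IsBasicNilsequence Φ) (n₀ : ℕ)
    (p : Ultrafilter ℕ) (hp : p + p = p) :
    Tendsto (fun n => Φ (n + n₀)) ↑p (𝓝 (Φ n₀)) := by
  obtain ⟨Nm, f, τ, x, hx⟩ := hΦ
  set Γb : Subgroup Nm.G := Nm.Γ.topologicalClosure with hΓb
  have hΓbc : IsClosed (Γb : Set Nm.G) := Subgroup.isClosed_topologicalClosure _
  -- f is invariant by the closure of Γ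
  have hfconst : ∀ a b : Nm.G, (QuotientGroup.leftRel Γb) a b →
      f (QuotientGroup.mk a) = f (QuotientGroup.mk b) := by
    intro a b hab
    rw [QuotientGroup.leftRel_apply] at hab
    have hcl : ∀ w ∈ (Γb : Set Nm.G),
        f (QuotientGroup.mk (a * w)) = f (QuotientGroup.mk a) := by
      intro w hw
      have hD : IsClosed {w : Nm.G |
          f (QuotientGroup.mk (a * w)) = f (QuotientGroup.mk a)} :=
        isClosed_eq
          (f.continuous.comp (continuous_quot_mk.comp (continuous_mul_left a)))
          continuous_const
      have hsub : (Nm.Γ : Set Nm.G) ⊆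
          {w : Nm.G | f (QuotientGroup.mk (a * w)) = f (QuotientGroup.mk a)} := by
        intro γ hγ
        have : (QuotientGroup.mk (a * γ) : Nm.Space) = QuotientGroup.mk a := by
          apply QuotientGroup.eq.mpr
          simpa using Nm.Γ.inv_mem hγ
        simpa using congrArg f this
      exact closure_minimal hsub hD hw
    have h1 := hcl (a⁻¹ * b) hab
    rw [mul_inv_cancel_left] at h1
    exact h1.symm
  -- the factored function
  set fb : Nm.G ⧸ Γb → ℂ :=
    fun q => Quotient.liftOn' q (fun a => f (QuotientGroup.mk a)) hfconst with hfb
  have hfbcont : Continuous fb :=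
    Continuous.quotient_liftOn' (f.continuous.comp continuous_quot_mk) hfconst
  -- compactness of the new quotient
  have hrel : ∀ a b : Nm.G,
      (QuotientGroup.leftRel Nm.Γ) a b → (QuotientGroup.leftRel Γb) (id a) (id b) := by
    intro a b hab
    rw [QuotientGroup.leftRel_apply] at hab ⊢
    exact Nm.Γ.le_topologicalClosure hab
  have hπsurj : Function.Surjective (Quotient.map' id hrel : Nm.Space → Nm.G ⧸ Γb) := by
    intro b
    obtain ⟨a, rfl⟩ := QuotientGroup.mk_surjective b
    exact ⟨QuotientGroup.mk a, rfl⟩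
  haveI : CompactSpace (Quotient (QuotientGroup.leftRel Nm.Γ)) := Nm.cpt
  haveI hcpt : CompactSpace (Nm.G ⧸ Γb) :=
    ⟨by
      rw [← Set.range_eq_univ.mpr hπsurj]
      exact isCompact_range (continuous_id.quotient_map' _)⟩
  -- base point
  obtain ⟨x₀, rfl⟩ := QuotientGroup.mk_surjective x
  have key : ∀ m : ℕ, fb (τ ^ m • (QuotientGroup.mk x₀ : Nm.G ⧸ Γb)) = Φ m := by
    intro m
    rw [hx m]
    rfl
  have horb := idempotent_rec Nm.nilpotent Γb hΓbc hcpt p hp τ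
    (τ ^ n₀ • (QuotientGroup.mk x₀ : Nm.G ⧸ Γb))
  have hcomp := (hfbcont.tendsto _).comp horb
  have heqfun : (fun n => fb (τ ^ n • (τ ^ n₀ • (QuotientGroup.mk x₀ : Nm.G ⧸ Γb)))) =
      fun n => Φ (n + n₀) := by
    funext n
    rw [smul_smul, ← pow_add, key]
  rw [Function.comp_def, heqfun, key n₀] at hcomp
  exact hcomp


/-- Uniqueness of the nil+null decomposition. -/
theorem nil_null_decomposition_unique (ψ₁ ψ₂ ε₁ ε₂ : ℕ → ℂ)
    (hψ₁ : IsNilsequence ψ₁) (hψ₂ : IsNilsequence ψ₂)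
    (hε₁ : IsNullSeq ε₁) (hε₂ : IsNullSeq ε₂)
    (heq : ∀ n : ℕ, ψ₁ n + ε₁ n = ψ₂ n + ε₂ n) :
    (∀ n : ℕ, ψ₁ n = ψ₂ n) ∧ (∀ n : ℕ, ε₁ n = ε₂ n) := by
  set ψ : ℕ → ℂ := fun n => ψ₁ n - ψ₂ n with hψdef
  have hψe : ∀ n, ψ n = ε₂ n - ε₁ n := fun n => by
    have h := heq n
    rw [hψdef]
    simp only []
    linear_combination h
  -- the difference has null averages
  have hnullψ : Tendsto
      (fun M : ℕ => (M : ℝ)⁻¹ * ∑ n ∈ Finset.range M, ‖ψ (n + 1)‖)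
      atTop (𝓝 0) := by
    obtain ⟨-, hn₁⟩ := hε₁
    obtain ⟨-, hn₂⟩ := hε₂
    have hbound : ∀ M : ℕ,
        (M : ℝ)⁻¹ * ∑ n ∈ Finset.range M, ‖ψ (n + 1)‖ ≤
        ((M : ℝ)⁻¹ * ∑ n ∈ Finset.range M, ‖ε₁ (n + 1)‖) +
        ((M : ℝ)⁻¹ * ∑ n ∈ Finset.range M, ‖ε₂ (n + 1)‖) := by
      intro M
      rw [← mul_add, ← Finset.sum_add_distrib]
      refine mul_le_mul_of_nonneg_left (Finset.sum_le_sum fun n _ => ?_) (by positivity)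
      rw [hψe]
      have h1 := norm_sub_le_norm_sub_add_norm_sub (ε₂ (n + 1)) 0 (ε₁ (n + 1))
      simp only [sub_zero, zero_sub, norm_neg] at h1
      calc ‖ε₂ (n + 1) - ε₁ (n + 1)‖ ≤
          ‖ε₂ (n + 1)‖ + ‖ε₁ (n + 1)‖ := h1
      _ = ‖ε₁ (n + 1)‖ + ‖ε₂ (n + 1)‖ := add_comm _ _
    have hsum : Tendsto (fun M : ℕ =>
        ((M : ℝ)⁻¹ * ∑ n ∈ Finset.range M, ‖ε₁ (n + 1)‖) +
        ((M : ℝ)⁻¹ * ∑ n ∈ Finset.range M, ‖ε₂ (n + 1)‖))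
        atTop (𝓝 0) := by
      have := hn₁.add hn₂
      simpa using this
    exact squeeze_zero (fun M => by positivity) hbound hsum
  have key : ∀ n : ℕ, ψ₁ n = ψ₂ n := by
    intro n₀
    by_contra hne
    set c : ℝ := ‖ψ₁ n₀ - ψ₂ n₀‖ with hcdef
    have hc : 0 < c := by
      rw [hcdef]
      exact norm_pos_iff.mpr (sub_ne_zero.mpr hne)
    obtain ⟨Ψ₁, hb₁, hu₁⟩ := hψ₁
    obtain ⟨Ψ₂, hb₂, hu₂⟩ := hψ₂
    have h8 : 0 < c / 8 := by linarith
    obtain ⟨K, hK₁, hK₂⟩ :=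
      (((Metric.tendstoUniformly_iff.mp hu₁) (c / 8) h8).and
        ((Metric.tendstoUniformly_iff.mp hu₂) (c / 8) h8)).exists
    set a : ℕ → ℂ := fun n => Ψ₁ K (n + n₀) - Ψ₂ K (n + n₀) with hadef
    set z : ℂ := Ψ₁ K n₀ - Ψ₂ K n₀ with hzdef
    have hrec : ∀ p : Ultrafilter ℕ, p + p = p → Tendsto a ↑p (𝓝 z) := fun p hp =>
      (basic_nilsequence_rec (hb₁ K) n₀ p hp).sub (basic_nilsequence_rec (hb₂ K) n₀ p hp)
    obtain ⟨N, hN⟩ := syndetic_of_idempotent_rec a z hrec Metric.isOpen_ball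
      (Metric.mem_ball_self (by linarith : (0:ℝ) < c / 4))
    have hsyn : ∀ m, ∃ k ≤ N + n₀, c / 4 ≤ ‖ψ (m + k + 1)‖ := by
      intro m
      obtain ⟨k, hkN, hkball⟩ := hN (m + 1)
      refine ⟨k + n₀, by omega, ?_⟩
      have hpos : m + (k + n₀) + 1 = (m + 1 + k) + n₀ := by ring
      rw [hpos]
      set q : ℕ := m + 1 + k with hq
      -- estimates
      have d1 : ‖ψ₁ (q + n₀) - Ψ₁ K (q + n₀)‖ < c / 8 := by
        have := hK₁ (q + n₀); rwa [Complex.dist_eq] at this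
      have d2 : ‖ψ₂ (q + n₀) - Ψ₂ K (q + n₀)‖ < c / 8 := by
        have := hK₂ (q + n₀); rwa [Complex.dist_eq] at this
      have d1' : ‖ψ₁ n₀ - Ψ₁ K n₀‖ < c / 8 := by
        have := hK₁ n₀; rwa [Complex.dist_eq] at this
      have d2' : ‖ψ₂ n₀ - Ψ₂ K n₀‖ < c / 8 := by
        have := hK₂ n₀; rwa [Complex.dist_eq] at this
      have dz : ‖a q - z‖ < c / 4 := by
        have := Metric.mem_ball.mp hkball
        rwa [Complex.dist_eq] at this
      -- triangle inequalities
      have htri : ‖ψ₁ n₀ - ψ₂ n₀‖ ≤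
          ‖ψ (q + n₀)‖ +
          ‖(ψ₁ n₀ - ψ₂ n₀) - ψ (q + n₀)‖ := by
        have h := norm_add_le (ψ (q + n₀)) ((ψ₁ n₀ - ψ₂ n₀) - ψ (q + n₀))
        simpa using h
      have hsplit : ‖(ψ₁ n₀ - ψ₂ n₀) - ψ (q + n₀)‖ < 3 * (c / 4) := by
        have e : (ψ₁ n₀ - ψ₂ n₀) - ψ (q + n₀) =
            (((ψ₁ n₀ - Ψ₁ K n₀) - (ψ₂ n₀ - Ψ₂ K n₀)) + (z - a q)) +
            ((Ψ₁ K (q + n₀) - ψ₁ (q + n₀)) - (Ψ₂ K (q + n₀) - ψ₂ (q + n₀))) := by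
          rw [hψdef, hzdef, hadef]
          simp only []
          ring
        rw [e]
        have t1 : ‖(ψ₁ n₀ - Ψ₁ K n₀) - (ψ₂ n₀ - Ψ₂ K n₀)‖ < c / 4 := by
          have h := norm_sub_le_norm_sub_add_norm_sub (ψ₁ n₀ - Ψ₁ K n₀) 0 (ψ₂ n₀ - Ψ₂ K n₀)
          simp only [sub_zero, zero_sub, norm_neg] at h
          linarith
        have t2 : ‖z - a q‖ < c / 4 := by
          rw [← norm_neg, neg_sub]
          exact dz
        have t3 : ‖(Ψ₁ K (q + n₀) - ψ₁ (q + n₀)) -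
            (Ψ₂ K (q + n₀) - ψ₂ (q + n₀))‖ < c / 4 := by
          have h := norm_sub_le_norm_sub_add_norm_sub (Ψ₁ K (q + n₀) - ψ₁ (q + n₀)) 0
            (Ψ₂ K (q + n₀) - ψ₂ (q + n₀))
          simp only [sub_zero, zero_sub, norm_neg] at h
          have e1 : ‖Ψ₁ K (q + n₀) - ψ₁ (q + n₀)‖ < c / 8 := by
            rw [← norm_neg, neg_sub]; exact d1
          have e2 : ‖Ψ₂ K (q + n₀) - ψ₂ (q + n₀)‖ < c / 8 := by
            rw [← norm_neg, neg_sub]; exact d2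
          linarith
        calc ‖_‖ ≤
            ‖((ψ₁ n₀ - Ψ₁ K n₀) - (ψ₂ n₀ - Ψ₂ K n₀)) + (z - a q)‖ +
            ‖(Ψ₁ K (q + n₀) - ψ₁ (q + n₀)) - (Ψ₂ K (q + n₀) - ψ₂ (q + n₀))‖ :=
          norm_add_le _ _
        _ ≤ (‖(ψ₁ n₀ - Ψ₁ K n₀) - (ψ₂ n₀ - Ψ₂ K n₀)‖ + ‖z - a q‖) +
            ‖(Ψ₁ K (q + n₀) - ψ₁ (q + n₀)) - (Ψ₂ K (q + n₀) - ψ₂ (q + n₀))‖ := by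
          have := norm_add_le ((ψ₁ n₀ - Ψ₁ K n₀) - (ψ₂ n₀ - Ψ₂ K n₀)) (z - a q)
          linarith
        _ < 3 * (c / 4) := by linarith
      have : c ≤ ‖ψ (q + n₀)‖ + 3 * (c / 4) := by
        rw [hcdef]
        calc ‖ψ₁ n₀ - ψ₂ n₀‖ ≤ _ := htri
        _ ≤ ‖ψ (q + n₀)‖ + 3 * (c / 4) := by linarith
      linarith
    exact not_null_of_syndetic_large ψ (c / 4) (by linarith) (N + n₀) hsyn hnullψ
  refine ⟨key, fun n => ?_⟩
  have h := heq n
  rw [key n] at h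
  exact add_left_cancel h

end NilNullHelpers
end

section
/- Let (r_n) be an increasing sequence of positive integers and suppose there exists a finite non-atomic positive Borel measure σ on the circle 𝕋 = ℝ/ℤ such that limsup_{N→∞} (1/N) Σ_{n=1}^N |σ̂(r_n)| > 0, where σ̂(m) = ∫_𝕋 e^{2πimt} dσ(t). Then there exist an invertible measure-preserving transformation T of a probability space (X, μ), a function f ∈ L^∞(μ), and finite positive Borel measures σ_d and σ_c on 𝕋, with σ_d concentrated on a countable set and σ_c non-atomic, such that ∫_X f · conj(f ∘ Tⁿ) dμ = σ̂_d(n) + σ̂_c(n) for all n ≥ 0, and limsup_{N→∞} (1/N) Σ_{n=1}^N |σ̂_c(r_n)| > 0. -/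
open Filter MeasureTheory Topology

/-- The `m`-th Fourier coefficient `σ̂(m) = ∫_𝕋 e^{2πimt} dσ(t)` of a measure on the
circle `𝕋 = ℝ/ℤ`. -/
noncomputable def measureFourierCoeff (σ : Measure UnitAddCircle) (m : ℤ) : ℂ :=
  ∫ t, fourier m t ∂σ

noncomputable def skewT : (UnitAddCircle × UnitAddCircle) ≃ (UnitAddCircle × UnitAddCircle) where
  toFun p := (p.1, p.2 + p.1)
  invFun p := (p.1, p.2 - p.1)
  left_inv p := by simp
  right_inv p := by simp

lemma skewT_pow (n : ℕ) (p : UnitAddCircle × UnitAddCircle) :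
    (skewT ^ n) p = (p.1, p.2 + n • p.1) := by
  induction n generalizing p with
  | zero => simp
  | succ k ih =>
    rw [pow_succ, Equiv.Perm.mul_apply, ih]
    simp [skewT, succ_nsmul]
    abel

/-- If `(r_n)` is increasing and some finite non-atomic measure `σ` on
`𝕋` has `limsup_N (1/N) ∑_{n=1}^N |σ̂(r_n)| > 0`, then there is a single linear
correlation `n ↦ ∫ f ⬝ conj(f ∘ Tⁿ) dμ = σ̂_d(n) + σ̂_c(n)` (its nil+null decomposition,
with `σ_d` discrete and `σ_c` continuous) whose null component `σ̂_c` is not null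
along `(r_n)`. -/
theorem correlation_not_null_along_from_continuous_measure
    (r : ℕ → ℕ) (hmono : StrictMono r) (hpos : ∀ n, 0 < r n)
    (σ : Measure UnitAddCircle) (hfin : IsFiniteMeasure σ)
    (hcont : ∀ t : UnitAddCircle, σ {t} = 0)
    (hbig : 0 < limsup (fun N : ℕ =>
      (N : ℝ)⁻¹ * ∑ n ∈ Finset.range N, ‖measureFourierCoeff σ (r n)‖) atTop) :
    ∃ (X : Type) (mX : MeasurableSpace X) (μ : @Measure X mX)
      (_ : IsProbabilityMeasure μ) (T : X ≃ X),
      Measurable ⇑T ∧ Measurable ⇑T.symm ∧ MeasurePreserving ⇑T μ μ ∧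
      ∃ f : X → ℂ, Measurable f ∧ (∃ C : ℝ, ∀ x, ‖f x‖ ≤ C) ∧
      ∃ σd σc : Measure UnitAddCircle, IsFiniteMeasure σd ∧ IsFiniteMeasure σc ∧
        (∃ S : Set UnitAddCircle, S.Countable ∧ σd Sᶜ = 0) ∧
        (∀ t : UnitAddCircle, σc {t} = 0) ∧
        (∀ n : ℕ, (∫ x, f x * (starRingEnd ℂ) (f ((T ^ n) x)) ∂μ) =
          measureFourierCoeff σd n + measureFourierCoeff σc n) ∧
        0 < limsup (fun N : ℕ =>
          (N : ℝ)⁻¹ * ∑ n ∈ Finset.range N,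
            ‖measureFourierCoeff σc (r n)‖) atTop := by
  classical
  haveI : IsProbabilityMeasure (volume : Measure UnitAddCircle) := ⟨UnitAddCircle.measure_univ⟩
  -- σ is nonzero
  have hσne : σ ≠ 0 := by
    rintro rfl
    have h0 : ∀ m : ℤ, measureFourierCoeff (0 : Measure UnitAddCircle) m = 0 := by
      intro m; simp [measureFourierCoeff]
    simp only [h0, norm_zero, Finset.sum_const_zero, mul_zero, limsup_const] at hbig
    exact lt_irrefl _ hbig
  haveI : NeZero σ := ⟨hσne⟩
  set c : ENNReal := σ Set.univ with hc
  have hc0 : c ≠ 0 := by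
    simpa [hc] using (Measure.measure_univ_ne_zero).mpr hσne
  have hctop : c ≠ ⊤ := measure_ne_top σ _
  set cR : ℝ := c.toReal with hcR
  have hcRpos : 0 < cR := ENNReal.toReal_pos hc0 hctop
  set σ' : Measure UnitAddCircle := c⁻¹ • σ with hσ'
  haveI : IsProbabilityMeasure σ' := MeasureTheory.isProbabilityMeasureSMul
  set μ : Measure (UnitAddCircle × UnitAddCircle) := σ'.prod volume with hμ
  haveI : IsProbabilityMeasure μ := by infer_instance
  have hTmeas : Measurable ⇑skewT := measurable_fst.prodMk (measurable_snd.add measurable_fst)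
  have hTsymm : Measurable ⇑skewT.symm :=
    measurable_fst.prodMk (measurable_snd.sub measurable_fst)
  have hTmp : MeasurePreserving ⇑skewT μ μ := by
    have h := (MeasurePreserving.id σ').skew_product (μc := volume) (μd := volume)
      (g := fun t y => y + t) (measurable_snd.add measurable_fst)
      (Filter.Eventually.of_forall fun t => (measurePreserving_add_right volume t).map_eq)
    exact h
  set f : UnitAddCircle × UnitAddCircle → ℂ :=
    fun p => (Real.sqrt cR : ℂ) * (fourier (-1) p.2) with hf
  have hfmeas : Measurable f :=
    measurable_const.mul ((map_continuous (fourier (-1) :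
      C(UnitAddCircle, ℂ))).measurable.comp measurable_snd)
  have habs : ∀ n x, ‖(fourier n : C(UnitAddCircle, ℂ)) x‖ = 1 := by
    intro n x
    rw [fourier_apply]
    exact Circle.norm_coe _
  refine ⟨UnitAddCircle × UnitAddCircle, inferInstance, μ, inferInstance, skewT,
    hTmeas, hTsymm, hTmp, f, hfmeas, ⟨Real.sqrt cR, ?_⟩, 0, σ, inferInstance, hfin,
    ⟨∅, Set.countable_empty, rfl⟩, hcont, ?_, hbig⟩
  · intro x
    rw [hf]
    simp only [norm_mul, Complex.norm_real, Real.norm_eq_abs, habs, mul_one,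
      abs_of_nonneg (Real.sqrt_nonneg cR)]
    exact le_rfl
  · intro n
    have hcoeff0 : measureFourierCoeff (0 : Measure UnitAddCircle) n = 0 := by
      simp [measureFourierCoeff]
    rw [hcoeff0, zero_add]
    -- pointwise computation
    have hpt : (fun x => f x * (starRingEnd ℂ) (f ((skewT ^ n) x))) =
        fun p : UnitAddCircle × UnitAddCircle => (cR : ℂ) * fourier (n : ℤ) p.1 := by
      funext p
      rw [skewT_pow]
      simp only [hf]
      rw [map_mul, ← fourier_neg, neg_neg, Complex.conj_ofReal]
      have h1 : (fourier 1 (p.2 + n • p.1) : ℂ) =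
          fourier 1 p.2 * fourier 1 (n • p.1) := by
        rw [fourier_apply, fourier_apply, fourier_apply, smul_add, AddCircle.toCircle_add]
        push_cast
        ring
      have h2 : (fourier 1 ((n : ℕ) • p.1) : ℂ) = fourier (n : ℤ) p.1 := by
        rw [fourier_apply, fourier_apply, one_smul, natCast_zsmul]
      have h3 : (fourier (-1) p.2 : ℂ) * fourier 1 p.2 = 1 := by
        rw [← fourier_add]
        simp [fourier_zero]
      have h4 : ((Real.sqrt cR : ℝ) : ℂ) * ((Real.sqrt cR : ℝ) : ℂ) = (cR : ℂ) := by
        rw [← Complex.ofReal_mul, Real.mul_self_sqrt hcRpos.le]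
      calc (Real.sqrt cR : ℂ) * fourier (-1) p.2 *
            ((Real.sqrt cR : ℂ) * fourier 1 (p.2 + n • p.1))
          = ((Real.sqrt cR : ℂ) * (Real.sqrt cR : ℂ)) *
            ((fourier (-1) p.2 * fourier 1 p.2) * fourier 1 (n • p.1)) := by
            rw [h1]; ring
        _ = (cR : ℂ) * fourier (n : ℤ) p.1 := by rw [h3, h4, one_mul, h2]
    rw [hpt]
    -- integrate out the second coordinate
    have hmap : Measure.map Prod.fst μ = σ' := by
      rw [hμ, Measure.map_fst_prod, measure_univ, one_smul]
    have hint : ∫ p : UnitAddCircle × UnitAddCircle, (cR : ℂ) * fourier (n : ℤ) p.1 ∂μ =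
        ∫ t, (cR : ℂ) * fourier (n : ℤ) t ∂σ' := by
      rw [← hmap, integral_map measurable_fst.aemeasurable]
      exact (continuous_const.mul
        (map_continuous (fourier (n : ℤ) : C(UnitAddCircle, ℂ)))).aestronglyMeasurable
    rw [hint, hσ']
    rw [integral_smul_measure]
    have : ∫ t, (cR : ℂ) * fourier (n : ℤ) t ∂σ = (cR : ℂ) * measureFourierCoeff σ n := by
      rw [measureFourierCoeff, integral_const_mul]
    rw [this, ENNReal.toReal_inv, ← hcR, Complex.real_smul]
    push_cast
    rw [← mul_assoc, inv_mul_cancel₀ (by exact_mod_cast hcRpos.ne' : (cR : ℂ) ≠ 0), one_mul]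
end
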